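/- With 𝒮ᵢ and ℛᵢ as above, the mixed relation 𝒮_{i+1} ∘ 𝒮ᵢ ∘ ℛ_{i+1} = ℛᵢ ∘ 𝒮_{i+1} ∘ 𝒮ᵢ holds on the pair (Fₙ, Mₙ) for 1 ≤ i ≤ n−2. -/

import Mathlib

/-- The free group `Fₙ` on generators `x₀, …, x_{n-1}` (0-based indexing). -/
abbrev FG (n : ℕ) := FreeGroup (Fin n)
/-- The group ring `ℤ[Fₙ]`. -/
abbrev GR (n : ℕ) := MonoidAlgebra ℤ (FG n)
/-- The free `ℤ[Fₙ]`-module `Mₙ` on `K₀, …, K_{n-1}`. -/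
abbrev M (n : ℕ) := Fin n →₀ GR n

/-- The generator `xᵢ`. -/
def X {n : ℕ} (i : Fin n) : FG n := FreeGroup.of i
/-- The module generator `Kᵢ`. -/
noncomputable def K {n : ℕ} (i : Fin n) : M n := Finsupp.single i 1

/-- The action `g ▷ m` of `Fₙ` on `Mₙ`, via the `ℤ[Fₙ]`-module structure. -/
noncomputable def act {n : ℕ} (g : FG n) (m : M n) : M n :=
  (MonoidAlgebra.of ℤ (FG n) g) • m

def fin0 (n i : ℕ) (h : i + 1 < n) : Fin n := ⟨i, Nat.lt_of_succ_lt h⟩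
def fin1 (n i : ℕ) (h : i + 1 < n) : Fin n := ⟨i + 1, h⟩

/-- The additive endomorphism of `Mₙ`, semilinear over the group endomorphism `f1`
(i.e. `m ↦ g ▷ m` goes to `m ↦ f1 g ▷ m`), determined by the images `t i` of the
generators `K i`. -/
noncomputable def lift2 {n : ℕ} (f1 : FG n →* FG n) (t : Fin n → M n) : M n →+ M n :=
  Finsupp.liftAddHom fun i =>
    { toFun := fun r => (MonoidAlgebra.mapDomainRingHom ℤ f1 r) • t i
      map_zero' := by simp
      map_add' := by intro a b; simp only [map_add, add_smul] }

/-- First component of the lifted Artin automorphism `𝒮ᵢ`. -/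
def S1 (n i : ℕ) (h : i + 1 < n) : FG n →* FG n :=
  FreeGroup.lift fun j =>
    if (j : ℕ) = i then X (fin1 n i h)
    else if (j : ℕ) = i + 1 then (X (fin1 n i h))⁻¹ * X (fin0 n i h) * X (fin1 n i h)
    else X j

/-- Second component of the lifted Artin automorphism `𝒮ᵢ`:
`Kᵢ ↦ Kᵢ + K_{i+1} − x_{i+1}⁻¹ ▷ Kᵢ`, `K_{i+1} ↦ x_{i+1}⁻¹ ▷ Kᵢ`, fixing other `Kⱼ`,
extended semilinearly over `𝒮ᵢ¹`. -/
noncomputable def S2 (n i : ℕ) (h : i + 1 < n) : M n →+ M n :=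
  lift2 (S1 n i h) fun j =>
    if (j : ℕ) = i then
      K (fin0 n i h) + K (fin1 n i h) - act (X (fin1 n i h))⁻¹ (K (fin0 n i h))
    else if (j : ℕ) = i + 1 then act (X (fin1 n i h))⁻¹ (K (fin0 n i h))
    else K j

/-- First component of the inverse `𝒮̄ᵢ`: `xᵢ ↦ xᵢ x_{i+1} xᵢ⁻¹`, `x_{i+1} ↦ xᵢ`. -/
def Sbar1 (n i : ℕ) (h : i + 1 < n) : FG n →* FG n :=
  FreeGroup.lift fun j =>
    if (j : ℕ) = i then X (fin0 n i h) * X (fin1 n i h) * (X (fin0 n i h))⁻¹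
    else if (j : ℕ) = i + 1 then X (fin0 n i h)
    else X j

/-- Second component of the inverse `𝒮̄ᵢ`: `Kᵢ ↦ xᵢ ▷ K_{i+1}`,
`K_{i+1} ↦ Kᵢ + K_{i+1} − xᵢ ▷ K_{i+1}`, fixing other `Kⱼ`. -/
noncomputable def Sbar2 (n i : ℕ) (h : i + 1 < n) : M n →+ M n :=
  lift2 (Sbar1 n i h) fun j =>
    if (j : ℕ) = i then act (X (fin0 n i h)) (K (fin1 n i h))
    else if (j : ℕ) = i + 1 then
      K (fin0 n i h) + K (fin1 n i h) - act (X (fin0 n i h)) (K (fin1 n i h))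
    else K j

/-- First component of the transposition automorphism `ℛᵢ`. -/
def R1 (n i : ℕ) (h : i + 1 < n) : FG n →* FG n :=
  FreeGroup.lift fun j =>
    if (j : ℕ) = i then X (fin1 n i h)
    else if (j : ℕ) = i + 1 then X (fin0 n i h)
    else X j

/-- Second component of `ℛᵢ`: swaps `Kᵢ` and `K_{i+1}`, fixing other `Kⱼ`. -/
noncomputable def R2 (n i : ℕ) (h : i + 1 < n) : M n →+ M n :=
  lift2 (R1 n i h) fun j =>
    if (j : ℕ) = i then K (fin1 n i h)
    else if (j : ℕ) = i + 1 then K (fin0 n i h)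
    else K j

/-- First component of the inversion automorphism `𝒯ᵢ`: `xᵢ ↦ xᵢ⁻¹`. -/
def T1 (n i : ℕ) (h : i < n) : FG n →* FG n :=
  FreeGroup.lift fun j => if (j : ℕ) = i then (X (⟨i, h⟩ : Fin n))⁻¹ else X j

/-- Second component of `𝒯ᵢ`: fixes each `Kⱼ`, extended semilinearly over `𝒯ᵢ¹`. -/
noncomputable def T2 (n i : ℕ) (h : i < n) : M n →+ M n :=
  lift2 (T1 n i h) fun j => K j

/-!
Both sides of the second identity are additive maps of `Mₙ` that are semilinear over the
ring endomorphism of `ℤ[Fₙ]` induced by the corresponding side of the first identity. Once the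
first identity is checked on the generators `xⱼ`, the two sides are therefore semilinear over
the same map, hence agree as soon as they agree on the basis `Kⱼ`; only `Kᵢ`, `K_{i+1}` and
`K_{i+2}` need an actual computation.
-/

section Lift2

variable {n : ℕ}

def IsSemilinearOver (f : FG n →* FG n) (φ : M n →+ M n) : Prop :=
  ∀ (r : GR n) (m : M n), φ (r • m) = MonoidAlgebra.mapDomainRingHom ℤ f r • φ m

lemma IsSemilinearOver.comp {f g : FG n →* FG n} {φ ψ : M n →+ M n}
    (hφ : IsSemilinearOver f φ) (hψ : IsSemilinearOver g ψ) :
    IsSemilinearOver (f.comp g) (φ.comp ψ) := fun r m => by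
  rw [AddMonoidHom.comp_apply, hψ, hφ, MonoidAlgebra.mapDomainRingHom_comp, RingHom.comp_apply,
    AddMonoidHom.comp_apply]

lemma IsSemilinearOver.ext {f : FG n →* FG n} {φ ψ : M n →+ M n}
    (hφ : IsSemilinearOver f φ) (hψ : IsSemilinearOver f ψ) (h : ∀ j, φ (K j) = ψ (K j)) :
    φ = ψ := by
  refine Finsupp.addHom_ext fun j r => ?_
  have hr : Finsupp.single j r = r • K j := by simp [K, Finsupp.smul_single]
  rw [hr, hφ, hψ, h]

lemma lift2_single (f : FG n →* FG n) (t : Fin n → M n) (j : Fin n) (r : GR n) :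
    lift2 f t (Finsupp.single j r) = MonoidAlgebra.mapDomainRingHom ℤ f r • t j := by
  simp [lift2]

@[simp] lemma lift2_K (f : FG n →* FG n) (t : Fin n → M n) (j : Fin n) :
    lift2 f t (K j) = t j := by
  simp [K, lift2_single]

lemma isSemilinearOver_lift2 (f : FG n →* FG n) (t : Fin n → M n) :
    IsSemilinearOver f (lift2 f t) := fun r m => by
  induction m using Finsupp.induction with
  | zero => simp
  | single_add j c s _ _ ih =>
      rw [smul_add, map_add, ih, map_add, smul_add, Finsupp.smul_single, lift2_single,
        lift2_single, smul_eq_mul, map_mul, mul_smul]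

@[simp] lemma lift2_act (f : FG n →* FG n) (t : Fin n → M n) (g : FG n) (m : M n) :
    lift2 f t (act g m) = act (f g) (lift2 f t m) := by
  simp [act, isSemilinearOver_lift2 f t _ m, MonoidAlgebra.of_apply,
    MonoidAlgebra.mapDomainRingHom_apply]

end Lift2

section MixedRelation

variable {n i : ℕ} (h2 : i + 2 < n) (h1 : i + 1 < n)

lemma S1_comp_S1_comp_R1 :
    (S1 n (i + 1) h2).comp ((S1 n i h1).comp (R1 n (i + 1) h2)) =
      (R1 n i h1).comp ((S1 n (i + 1) h2).comp (S1 n i h1)) := by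
  refine FreeGroup.ext_hom _ _ fun ⟨j, hj⟩ => ?_
  rcases (by omega : j = i ∨ j = i + 1 ∨ j = i + 2 ∨ (j ≠ i ∧ j ≠ i + 1 ∧ j ≠ i + 2))
    with rfl | rfl | rfl | ⟨hi, hi₁, hi₂⟩ <;>
  simp +arith [S1, R1, X, fin0, fin1, *]

lemma S2_S2_R2_K (j : Fin n) :
    S2 n (i + 1) h2 (S2 n i h1 (R2 n (i + 1) h2 (K j))) =
      R2 n i h1 (S2 n (i + 1) h2 (S2 n i h1 (K j))) := by
  obtain ⟨j, hj⟩ := j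
  rcases (by omega : j = i ∨ j = i + 1 ∨ j = i + 2 ∨ (j ≠ i ∧ j ≠ i + 1 ∧ j ≠ i + 2))
    with rfl | rfl | rfl | ⟨hi, hi₁, hi₂⟩
  · simp +arith [S1, R1, S2, R2, X, fin0, fin1]
    abel
  all_goals simp +arith [S1, R1, S2, R2, X, fin0, fin1, *]

end MixedRelation

/-- mixed relation `𝒮_{i+1} ∘ 𝒮ᵢ ∘ ℛ_{i+1} = ℛᵢ ∘ 𝒮_{i+1} ∘ 𝒮ᵢ` for the
automorphisms of the pair `(Fₙ, Mₙ)`. -/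
theorem liftedArtin_mixed_SSR (n i : ℕ) (h2 : i + 2 < n) (h1 : i + 1 < n) :
    (S1 n (i + 1) h2).comp ((S1 n i h1).comp (R1 n (i + 1) h2)) =
      (R1 n i h1).comp ((S1 n (i + 1) h2).comp (S1 n i h1)) ∧
    (S2 n (i + 1) h2).comp ((S2 n i h1).comp (R2 n (i + 1) h2)) =
      (R2 n i h1).comp ((S2 n (i + 1) h2).comp (S2 n i h1)) := by
  have hS (i h) : IsSemilinearOver (S1 n i h) (S2 n i h) := isSemilinearOver_lift2 _ _
  have hR (i h) : IsSemilinearOver (R1 n i h) (R2 n i h) := isSemilinearOver_lift2 _ _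
  have hLHS := (hS (i + 1) h2).comp ((hS i h1).comp (hR (i + 1) h2))
  rw [S1_comp_S1_comp_R1 h2 h1] at hLHS
  exact ⟨S1_comp_S1_comp_R1 h2 h1,
    hLHS.ext ((hR i h1).comp ((hS (i + 1) h2).comp (hS i h1))) (S2_S2_R2_K h2 h1)⟩
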